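/- Truncated Cauchy–Carlitz numbers via associated Stirling–Carlitz numbers of the first kind: for every integer N ≥ 1 and every n ≥ 1, CC_{N,n} = Π(n) Σ_{k=1}^{n} (n+1 choose k+1) · ((−1)^{Nk} (−L_N)^k Π(k)/Π(n + k r^N)) · {n + k r^N brack k}_{C,≥N}. -/

import Mathlib

/-!
Carlitz module: `Fq` is a finite field with `r = Fintype.card Fq` elements (so `r` is a
power of a prime `p`), and `K = Fq(T)` is the field of rational functions over `Fq`.
-/

noncomputable section

variable (Fq : Type*) [Field Fq] [Fintype Fq]

/-- `r`, the number of elements of the finite field `Fq` (a prime power). -/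
def rq : ℕ := Fintype.card Fq

/-- `[i] = T^{r^i} − T` in `K = Fq(T)`. -/
def carlitzBracket (i : ℕ) : RatFunc Fq := RatFunc.X ^ rq Fq ^ i - RatFunc.X

/-- `D_0 = 1`, `D_i = [i]·D_{i−1}^r`. -/
def carlitzD : ℕ → RatFunc Fq
  | 0 => 1
  | i + 1 => carlitzBracket Fq (i + 1) * carlitzD i ^ rq Fq

/-- `L_0 = 1`, `L_i = [i]·L_{i−1}`. -/
def carlitzL : ℕ → RatFunc Fq
  | 0 => 1
  | i + 1 => carlitzBracket Fq (i + 1) * carlitzL i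

/-- The Carlitz factorial `Π(i) = ∏_j D_j^{c_j}`, where `i = Σ_j c_j r^j` with
`0 ≤ c_j < r` is the base-`r` expansion of `i`. -/
def carlitzPi (i : ℕ) : RatFunc Fq :=
  ∏ j ∈ Finset.range (i + 1), carlitzD Fq j ^ (Nat.digits (rq Fq) i).getD j 0

/-- The power series `Σ_{j=0}^∞ (D_N/D_{N+j}) x^{r^{N+j} − r^N}`, i.e.
`(e_C(x) − Σ_{i=0}^{N−1} x^{r^i}/D_i)·D_N/x^{r^N}`; it has constant term `1`. -/
def bcSeries (N : ℕ) : PowerSeries (RatFunc Fq) :=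
  PowerSeries.mk fun m => ∑ j ∈ Finset.range (m + 1),
    if m = rq Fq ^ (N + j) - rq Fq ^ N then carlitzD Fq N / carlitzD Fq (N + j) else 0

/-- The truncated Bernoulli–Carlitz number `BC_{N,n}`: `BC_{N,n}/Π(n)` is the `n`-th
coefficient of the multiplicative inverse of the power series
`Σ_{j=0}^∞ (D_N/D_{N+j}) x^{r^{N+j} − r^N}`. -/
def truncBC (N n : ℕ) : RatFunc Fq :=
  carlitzPi Fq n * PowerSeries.coeff n (bcSeries Fq N)⁻¹

/-- The power series `Σ_{j=0}^∞ (−1)^j (L_N/L_{N+j}) x^{r^{N+j} − r^N}`, i.e.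
`(log_C(x) − Σ_{i=0}^{N−1} (−1)^i x^{r^i}/L_i)·(−1)^N L_N/x^{r^N}`;
it has constant term `1`. -/
def ccSeries (N : ℕ) : PowerSeries (RatFunc Fq) :=
  PowerSeries.mk fun m => ∑ j ∈ Finset.range (m + 1),
    if m = rq Fq ^ (N + j) - rq Fq ^ N then
      (-1) ^ j * carlitzL Fq N / carlitzL Fq (N + j) else 0

/-- The truncated Cauchy–Carlitz number `CC_{N,n}`: `CC_{N,n}/Π(n)` is the `n`-th
coefficient of the multiplicative inverse of the power series
`Σ_{j=0}^∞ (−1)^j (L_N/L_{N+j}) x^{r^{N+j} − r^N}`. -/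
def truncCC (N n : ℕ) : RatFunc Fq :=
  carlitzPi Fq n * PowerSeries.coeff n (ccSeries Fq N)⁻¹

/-- The tail `e_C(z) − 𝓔_{N−1}(z) = Σ_{i=N}^∞ z^{r^i}/D_i` of the Carlitz exponential. -/
def carlitzExpTail (N : ℕ) : PowerSeries (RatFunc Fq) :=
  PowerSeries.mk fun m => ∑ j ∈ Finset.range (m + 1),
    if m = rq Fq ^ (N + j) then (carlitzD Fq (N + j))⁻¹ else 0

/-- The associated Stirling–Carlitz number of the second kind `{n brace k}_{C,≥N}`,
defined by `(e_C(z) − 𝓔_{N−1}(z))^k/Π(k) = Σ_n {n brace k}_{C,≥N} z^n/Π(n)`. -/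
def stirling2C (N k n : ℕ) : RatFunc Fq :=
  carlitzPi Fq n / carlitzPi Fq k * PowerSeries.coeff n (carlitzExpTail Fq N ^ k)

/-- The tail `log_C(z) − 𝓕_{N−1}(z) = Σ_{i=N}^∞ (−1)^i z^{r^i}/L_i` of the Carlitz
logarithm. -/
def carlitzLogTail (N : ℕ) : PowerSeries (RatFunc Fq) :=
  PowerSeries.mk fun m => ∑ j ∈ Finset.range (m + 1),
    if m = rq Fq ^ (N + j) then (-1) ^ (N + j) * (carlitzL Fq (N + j))⁻¹ else 0

/-- The associated Stirling–Carlitz number of the first kind `{n brack k}_{C,≥N}`,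
defined by `(log_C(z) − 𝓕_{N−1}(z))^k/Π(k) = Σ_n {n brack k}_{C,≥N} z^n/Π(n)`. -/
def stirling1C (N k n : ℕ) : RatFunc Fq :=
  carlitzPi Fq n / carlitzPi Fq k * PowerSeries.coeff n (carlitzLogTail Fq N ^ k)


lemma two_le_rq : 2 ≤ rq Fq := Fintype.one_lt_card

lemma carlitzBracket_ne_zero {i : ℕ} (hi : 1 ≤ i) : carlitzBracket Fq i ≠ 0 := by
  have hr : 2 ≤ rq Fq ^ i :=
    le_trans (two_le_rq Fq) (Nat.le_self_pow (by omega) _)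
  have hp : (Polynomial.X ^ (rq Fq ^ i) - Polynomial.X : Polynomial Fq) ≠ 0 := by
    intro h
    have h2 := congrArg (fun q => Polynomial.coeff q (rq Fq ^ i)) h
    simp only [Polynomial.coeff_sub, Polynomial.coeff_X_pow, if_pos rfl,
      Polynomial.coeff_X, Polynomial.coeff_zero] at h2
    rw [if_neg (by omega : ¬(1 = rq Fq ^ i))] at h2
    simp at h2
  have hb : carlitzBracket Fq i =
      algebraMap (Polynomial Fq) (RatFunc Fq) (Polynomial.X ^ (rq Fq ^ i) - Polynomial.X) := by
    rw [map_sub, map_pow, RatFunc.algebraMap_X, carlitzBracket]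
  rw [hb]
  exact (map_ne_zero_iff _ (RatFunc.algebraMap_injective Fq)).mpr hp

lemma carlitzD_ne_zero (i : ℕ) : carlitzD Fq i ≠ 0 := by
  induction i with
  | zero => simp [carlitzD]
  | succ i ih =>
    simp only [carlitzD]
    exact mul_ne_zero (carlitzBracket_ne_zero Fq (by omega)) (pow_ne_zero _ ih)

lemma carlitzL_ne_zero (i : ℕ) : carlitzL Fq i ≠ 0 := by
  induction i with
  | zero => simp [carlitzL]
  | succ i ih =>
    simp only [carlitzL]
    exact mul_ne_zero (carlitzBracket_ne_zero Fq (by omega)) ih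

lemma carlitzPi_ne_zero (i : ℕ) : carlitzPi Fq i ≠ 0 := by
  rw [carlitzPi]
  exact Finset.prod_ne_zero_iff.mpr fun j _ => pow_ne_zero _ (carlitzD_ne_zero Fq j)

lemma constCoeff_ccSeries (N : ℕ) :
    PowerSeries.constantCoeff (ccSeries Fq N) = 1 := by
  rw [← PowerSeries.coeff_zero_eq_constantCoeff_apply]
  simp [ccSeries, div_self (carlitzL_ne_zero Fq N)]

lemma le_of_eq_pow_sub {N j d : ℕ} (h : d = rq Fq ^ (N + j) - rq Fq ^ N) : j ≤ d := by
  have hr := two_le_rq Fq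
  have h1 : j ≤ 2 ^ j - 1 := by
    have := Nat.lt_two_pow_self (n := j); omega
  have h2 : (2:ℕ) ^ j ≤ rq Fq ^ j := Nat.pow_le_pow_left hr j
  have h3 : rq Fq ^ j - 1 ≤ (rq Fq ^ j - 1) * rq Fq ^ N :=
    Nat.le_mul_of_pos_right _ (Nat.pow_pos (by omega))
  have h4 : (rq Fq ^ j - 1) * rq Fq ^ N = rq Fq ^ (N + j) - rq Fq ^ N := by
    rw [Nat.sub_mul, one_mul, ← pow_add, add_comm j N]
  omega

lemma carlitzLogTail_eq (N : ℕ) :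
    carlitzLogTail Fq N =
      (((-1) ^ N * (carlitzL Fq N)⁻¹ : RatFunc Fq)) •
        (PowerSeries.X ^ rq Fq ^ N * ccSeries Fq N) := by
  have hr := two_le_rq Fq
  ext m
  rw [PowerSeries.coeff_smul, PowerSeries.coeff_X_pow_mul', smul_eq_mul]
  by_cases h : rq Fq ^ N ≤ m
  · rw [if_pos h]
    set d := m - rq Fq ^ N with hd
    rw [carlitzLogTail, ccSeries, PowerSeries.coeff_mk, PowerSeries.coeff_mk,
      Finset.mul_sum]
    have hsub : Finset.range (d + 1) ⊆ Finset.range (m + 1) :=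
      Finset.range_subset_range.mpr (by omega)
    have hz : ∀ j ∈ Finset.range (m + 1), j ∉ Finset.range (d + 1) →
        (if m = rq Fq ^ (N + j) then
          (-1) ^ (N + j) * (carlitzL Fq (N + j))⁻¹ else 0) = 0 := by
      intro j _ hj
      rw [Finset.mem_range, not_lt] at hj
      rw [if_neg]
      intro hc
      have hle : rq Fq ^ N ≤ rq Fq ^ (N + j) :=
        Nat.pow_le_pow_right (by omega) (by omega)
      have : j ≤ d := le_of_eq_pow_sub Fq (N := N) (j := j) (by omega)
      omega
    rw [← Finset.sum_subset hsub hz]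
    refine Finset.sum_congr rfl fun j _ => ?_
    have hle : rq Fq ^ N ≤ rq Fq ^ (N + j) :=
      Nat.pow_le_pow_right (by omega) (by omega)
    by_cases hc : m = rq Fq ^ (N + j)
    · rw [if_pos hc, if_pos (by omega)]
      have hLj := carlitzL_ne_zero Fq (N + j)
      have hLN := carlitzL_ne_zero Fq N
      field_simp
      rw [pow_add]
    · rw [if_neg hc, if_neg (by omega), mul_zero]
  · rw [if_neg h, mul_zero, carlitzLogTail, PowerSeries.coeff_mk]
    refine Finset.sum_eq_zero fun j _ => ?_
    rw [if_neg]
    intro hc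
    have hle : rq Fq ^ N ≤ rq Fq ^ (N + j) :=
      Nat.pow_le_pow_right (by omega) (by omega)
    omega

lemma coeff_logTail_pow (N k n : ℕ) :
    PowerSeries.coeff (n + k * rq Fq ^ N) (carlitzLogTail Fq N ^ k)
      = ((-1) ^ N * (carlitzL Fq N)⁻¹) ^ k *
          PowerSeries.coeff n (ccSeries Fq N ^ k) := by
  rw [carlitzLogTail_eq, smul_pow, PowerSeries.coeff_smul, smul_eq_mul,
    mul_pow (PowerSeries.X ^ rq Fq ^ N), ← pow_mul, mul_comm (rq Fq ^ N) k,
    PowerSeries.coeff_X_pow_mul]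

/-- truncated Cauchy–Carlitz numbers via associated Stirling–Carlitz
numbers of the first kind. -/
theorem truncCC_eq_sum_stirling1C (N n : ℕ) (hN : 1 ≤ N) (hn : 1 ≤ n) :
    truncCC Fq N n =
      carlitzPi Fq n * ∑ k ∈ Finset.Icc 1 n,
        ((n + 1).choose (k + 1) : RatFunc Fq) *
          ((-1) ^ (N * k) * (-carlitzL Fq N) ^ k * carlitzPi Fq k /
            carlitzPi Fq (n + k * rq Fq ^ N)) *
          stirling1C Fq N k (n + k * rq Fq ^ N) := by
  have hr := two_le_rq Fq
  have hL := carlitzL_ne_zero Fq N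
  have hg0 : PowerSeries.constantCoeff (ccSeries Fq N) ≠ 0 := by
    rw [constCoeff_ccSeries]; exact one_ne_zero
  set g := ccSeries Fq N with hg
  have hterm : ∀ k ∈ Finset.Icc 1 n,
      ((n + 1).choose (k + 1) : RatFunc Fq) *
        ((-1) ^ (N * k) * (-carlitzL Fq N) ^ k * carlitzPi Fq k /
          carlitzPi Fq (n + k * rq Fq ^ N)) *
        stirling1C Fq N k (n + k * rq Fq ^ N)
      = ((n + 1).choose (k + 1) : RatFunc Fq) * (-1) ^ k *
          PowerSeries.coeff n (g ^ k) := by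
    intro k hk
    rw [stirling1C, coeff_logTail_pow, mul_pow, ← pow_mul, ← hg]
    have h1 := carlitzPi_ne_zero Fq k
    have h2 := carlitzPi_ne_zero Fq (n + k * rq Fq ^ N)
    have hLk : carlitzL Fq N ^ k * (carlitzL Fq N)⁻¹ ^ k = 1 := by
      rw [← mul_pow, mul_inv_cancel₀ hL, one_pow]
    rcases Nat.even_or_odd (N * k) with h | h
    · rw [h.neg_one_pow]
      field_simp
      linear_combination (((n + 1).choose (k + 1) : RatFunc Fq) * PowerSeries.coeff n (g ^ k) * (-1) ^ k) * hLk
    · rw [h.neg_one_pow]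
      field_simp
      linear_combination (((n + 1).choose (k + 1) : RatFunc Fq) * PowerSeries.coeff n (g ^ k) * (-1) ^ k) * hLk
  have key : PowerSeries.coeff n g⁻¹
      = ∑ k ∈ Finset.range (n + 1),
          ((n + 1).choose (k + 1) : RatFunc Fq) * (-1) ^ k *
            PowerSeries.coeff n (g ^ k) := by
    set S : PowerSeries (RatFunc Fq) :=
      ∑ k ∈ Finset.range (n + 1),
        PowerSeries.C (((n + 1).choose (k + 1) : RatFunc Fq) * (-1) ^ k) * g ^ k
      with hS
    have hmul : g * S = 1 - (1 - g) ^ (n + 1) := by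
      have hb : (1 - g) ^ (n + 1)
          = ∑ k ∈ Finset.range (n + 2),
              (-g) ^ k * (1 : PowerSeries (RatFunc Fq)) ^ (n + 1 - k) * ((n + 1).choose k) := by
        rw [sub_eq_add_neg, add_comm]
        exact add_pow _ _ _
      rw [hb, Finset.sum_range_succ']
      simp only [pow_zero, one_pow, mul_one, one_mul, Nat.choose_zero_right, Nat.cast_one]
      rw [hS, Finset.mul_sum]
      have hco : ∀ k ∈ Finset.range (n + 1),
          g * (PowerSeries.C (((n + 1).choose (k + 1) : RatFunc Fq) * (-1) ^ k) * g ^ k)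
          = -((-g) ^ (k + 1) * (1 : PowerSeries (RatFunc Fq)) ^ (n + 1 - (k + 1)) *
              ((n + 1).choose (k + 1))) := by
        intro k _
        rw [map_mul, map_pow, map_neg, map_one, map_natCast, one_pow, neg_pow]
        ring
      rw [Finset.sum_congr rfl hco]
      simp only [one_pow, mul_one, Finset.sum_neg_distrib]
      ring
    have hSval : S = g⁻¹ - g⁻¹ * (1 - g) ^ (n + 1) := by
      calc S = (g⁻¹ * g) * S := by rw [PowerSeries.inv_mul_cancel _ hg0, one_mul]
        _ = g⁻¹ * (g * S) := by ring
        _ = g⁻¹ * (1 - (1 - g) ^ (n + 1)) := by rw [hmul]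
        _ = g⁻¹ - g⁻¹ * (1 - g) ^ (n + 1) := by ring
    have hzero : PowerSeries.coeff n (g⁻¹ * (1 - g) ^ (n + 1)) = 0 := by
      have hX : (PowerSeries.X : PowerSeries (RatFunc Fq)) ∣ (1 - g) := by
        rw [PowerSeries.X_dvd_iff, map_sub, map_one, hg, constCoeff_ccSeries, sub_self]
      have hdvd : (PowerSeries.X : PowerSeries (RatFunc Fq)) ^ (n + 1) ∣
          g⁻¹ * (1 - g) ^ (n + 1) :=
        Dvd.dvd.mul_left (pow_dvd_pow_of_dvd hX _) _
      exact PowerSeries.X_pow_dvd_iff.mp hdvd n (lt_add_one n)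
    have hc := congrArg (PowerSeries.coeff n) hSval
    rw [map_sub, hzero, sub_zero] at hc
    rw [← hc, hS, map_sum]
    exact Finset.sum_congr rfl fun k _ => by
      rw [PowerSeries.coeff_C_mul]
  rw [Finset.sum_congr rfl hterm, truncCC, ← hg, key]
  congr 1
  rw [Finset.sum_range_succ']
  have h0 : ((n + 1).choose (0 + 1) : RatFunc Fq) * (-1) ^ 0 *
      PowerSeries.coeff n (g ^ 0) = 0 := by
    rw [pow_zero g, PowerSeries.coeff_one, if_neg (by omega : ¬ n = 0)]
    ring
  rw [h0, add_zero]
  rw [show Finset.Icc 1 n = Finset.Ico 1 (n + 1) from Finset.Ico_add_one_right_eq_Icc 1 n,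
    Finset.sum_Ico_eq_sum_range]
  simp only [Nat.add_sub_cancel]
  exact Finset.sum_congr rfl fun i _ => by rw [add_comm 1 i]

end
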